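/- Assume ϖ_k is minuscule, J = I \ {k}, and let ⊲, ≺ be two reflection orders on Δ⁺ both satisfying: β ⊲ γ (resp. β ≺ γ) for all β ∈ Δ⁺_J and γ ∈ Δ⁺ \ Δ⁺_J. For y ∈ W^J, let ed(BG_y^⊲) denote the set of endpoints of label-increasing (with respect to ⊲) directed paths in the Bruhat graph BG(W) starting at y all of whose labels lie in Δ⁺ \ Δ⁺_J. Then ed(BG_y^⊲) = ed(BG_y^≺), i.e. this set of endpoints is independent of the choice of such a reflection order. -/

import Mathlib

/-- An axiomatized finite crystallographic root system datum, with weight/root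
space `V` over `ℚ`, simple roots `α i`, an invariant inner product `B`,
Weyl group `W` acting faithfully on `V`, and the set of roots `isRoot`. -/
structure RootSystemData (I : Type) [Fintype I] [DecidableEq I] where
  V : Type
  [instAddCommGroup : AddCommGroup V]
  [instModule : Module ℚ V]
  W : Type
  [instGroup : Group W]
  α : I → V
  B : V →ₗ[ℚ] V →ₗ[ℚ] ℚ
  toLin : W →* Module.End ℚ V
  s : I → W
  isRoot : V → Prop
  B_symm : ∀ x y, B x y = B y x
  B_pos : ∀ β, isRoot β → 0 < B β β
  B_inv : ∀ (w : W) (x y : V), B (toLin w x) (toLin w y) = B x y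
  root_simple : ∀ i, isRoot (α i)
  root_inv : ∀ (w : W) (β : V), isRoot β → isRoot (toLin w β)
  root_gen : ∀ β, isRoot β → ∃ (w : W) (i : I), β = toLin w (α i)
  root_finite : (setOf isRoot).Finite
  indep : LinearIndependent ℚ α
  s_act : ∀ i x, toLin (s i) x = x - (2 * B (α i) x / B (α i) (α i)) • α i
  gen : Subgroup.closure (Set.range s) = ⊤
  faithful : Function.Injective toLin
  root_int : ∀ β, isRoot β → ∃ c : I → ℤ, β = ∑ i, (c i : ℚ) • α i
  pos_or_neg : ∀ β, isRoot β →
    (∃ c : I → ℕ, β = ∑ i, (c i : ℚ) • α i) ∨ (∃ c : I → ℕ, -β = ∑ i, (c i : ℚ) • α i)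

attribute [instance] RootSystemData.instAddCommGroup RootSystemData.instModule
  RootSystemData.instGroup

namespace RootSystemData

variable {I : Type} [Fintype I] [DecidableEq I] (R : RootSystemData I)

/-- `β` is a positive root. -/
def IsPos (β : R.V) : Prop :=
  R.isRoot β ∧ ∃ c : I → ℕ, β = ∑ i, (c i : ℚ) • R.α i

/-- The finite set of positive roots. -/
noncomputable def posFinset : Finset R.V :=
  (Set.Finite.subset R.root_finite (fun _ hb => hb.1) : (setOf R.IsPos).Finite).toFinset

/-- Half the sum of the positive roots. -/
noncomputable def ρ : R.V := (2 : ℚ)⁻¹ • ∑ β ∈ R.posFinset, β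

/-- The pairing `⟨x, β∨⟩` of `x` with the coroot of `β`. -/
noncomputable def coroot (β x : R.V) : ℚ := 2 * R.B β x / R.B β β

open Classical in
/-- The reflection `s_β ∈ W` in a root `β`. -/
noncomputable def refl (β : R.V) : R.W :=
  if h : R.isRoot β then
    (R.root_gen β h).choose * R.s (R.root_gen β h).choose_spec.choose *
      (R.root_gen β h).choose⁻¹
  else 1

/-- The length function on the Weyl group. -/
noncomputable def len (w : R.W) : ℕ :=
  sInf {n | ∃ l : List I, l.length = n ∧ (l.map R.s).prod = w}

/-- Bruhat order: generated by multiplication by reflections which increases length. -/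
def bruhatLE : R.W → R.W → Prop :=
  Relation.ReflTransGen (fun u v => (∃ β, R.IsPos β ∧ v = R.refl β * u) ∧ R.len u < R.len v)

def bruhatLT (u v : R.W) : Prop := R.bruhatLE u v ∧ u ≠ v

/-- The parabolic subgroup `W_J`. -/
def WJ (J : Set I) : Subgroup R.W := Subgroup.closure (R.s '' J)

/-- `w` is a minimal-length representative of its coset `w W_J`. -/
def IsMinRep (J : Set I) (w : R.W) : Prop :=
  ∀ z ∈ R.WJ J, R.len w ≤ R.len (w * z)

/-- `β ∈ Δ⁺_J`: positive roots in the span of the simple roots indexed by `J`. -/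
def posJ (J : Set I) (β : R.V) : Prop :=
  R.IsPos β ∧ β ∈ Submodule.span ℚ (R.α '' J)

/-- A Bruhat edge `x → x s_β` in the quantum Bruhat graph. -/
def BruhatEdge (x : R.W) (β : R.V) : Prop :=
  R.IsPos β ∧ R.len (x * R.refl β) = R.len x + 1

/-- A quantum edge `x → x s_β` in the quantum Bruhat graph. -/
def QuantumEdge (x : R.W) (β : R.V) : Prop :=
  R.IsPos β ∧ (R.len (x * R.refl β) : ℚ) = R.len x + 1 - 2 * R.coroot β R.ρ

/-- An edge of the quantum Bruhat graph. -/
def QBGEdge (x : R.W) (β : R.V) : Prop := R.BruhatEdge x β ∨ R.QuantumEdge x β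

/-- A quantum root: `ℓ(s_β) = 2⟨ρ, β∨⟩ - 1`. -/
def IsQuantumRoot (β : R.V) : Prop :=
  R.IsPos β ∧ (R.len (R.refl β) : ℚ) = 2 * R.coroot β R.ρ - 1

/-- A long root (maximal squared length); in simply-laced type all roots are long. -/
def IsLong (β : R.V) : Prop :=
  R.isRoot β ∧ ∀ γ, R.isRoot γ → R.B γ γ ≤ R.B β β

/-- A short root. -/
def IsShort (β : R.V) : Prop := R.isRoot β ∧ ¬ R.IsLong β

def IsSimplyLaced : Prop :=
  ∀ β γ, R.isRoot β → R.isRoot γ → R.B β β = R.B γ γ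

def IsIrreducible : Prop :=
  Nonempty I ∧ ∀ J : Set I,
    (∀ i ∈ J, ∀ j ∉ J, R.B (R.α i) (R.α j) = 0) → J = ∅ ∨ J = Set.univ

/-- `θ` is the highest root. -/
def IsHighestRoot (θ : R.V) : Prop :=
  R.IsPos θ ∧ ∀ β, R.IsPos β → ∃ c : I → ℕ, θ - β = ∑ i, (c i : ℚ) • R.α i

/-- `ϖ` is the fundamental weight associated to `k`. -/
def IsFundamental (k : I) (ϖ : R.V) : Prop :=
  ∀ i, R.coroot (R.α i) ϖ = if i = k then 1 else 0

/-- `ϖ` is minuscule. -/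
def IsMinuscule (ϖ : R.V) : Prop :=
  ∀ β, R.isRoot β → R.coroot β ϖ ∈ ({-1, 0, 1} : Set ℚ)

/-- A strict total order on `Δ⁺` which is a reflection (convex) order. -/
def IsReflectionOrder (lt : R.V → R.V → Prop) : Prop :=
  (∀ β, ¬ lt β β) ∧ (∀ a b c, lt a b → lt b c → lt a c) ∧
  (∀ β γ, R.IsPos β → R.IsPos γ → β ≠ γ → lt β γ ∨ lt γ β) ∧
  (∀ β γ, R.IsPos β → R.IsPos γ → R.IsPos (β + γ) →
    (lt β (β + γ) ∧ lt (β + γ) γ) ∨ (lt γ (β + γ) ∧ lt (β + γ) β))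

end RootSystemData

open RootSystemData in
/-- A directed path in the quantum Bruhat graph with the given list of labels. -/
def QBGPath {I : Type} [Fintype I] [DecidableEq I] (R : RootSystemData I) :
    R.W → List R.V → R.W → Prop
  | x, [], y => x = y
  | x, β :: l, y => R.QBGEdge x β ∧ QBGPath R (x * R.refl β) l y

open RootSystemData in
/-- A directed path in the Bruhat graph (Bruhat edges only). -/
def BGPath {I : Type} [Fintype I] [DecidableEq I] (R : RootSystemData I) :
    R.W → List R.V → R.W → Prop
  | x, [], y => x = y
  | x, β :: l, y => R.BruhatEdge x β ∧ BGPath R (x * R.refl β) l y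

/-- The Cartan pairing `⟨α_j, α_i∨⟩` of type `B_n` (Bourbaki labelling, shifted
to be 0-based: the short simple root is the last one, index `n-1`). -/
def BCartan (n : ℕ) (i j : Fin n) : ℚ :=
  if i = j then 2
  else if (i : ℕ) = n - 1 ∧ (j : ℕ) + 1 = n - 1 then -2
  else if ((i : ℕ) + 1 = j ∨ (j : ℕ) + 1 = i) then -1
  else 0

/-- `R` is of type `B_n` (via the identification `e` of its index set with `Fin n`). -/
def IsTypeB {I : Type} [Fintype I] [DecidableEq I] (R : RootSystemData I)
    (n : ℕ) (e : I ≃ Fin n) : Prop :=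
  2 ≤ n ∧ ∀ i j, R.coroot (R.α i) (R.α j) = BCartan n (e i) (e j)

/-- The product `s_{a+1} s_{a+2} ⋯ s_{b+1}` (0-based: indices `a, a+1, …, b`). -/
noncomputable def sSeq {n : ℕ} (hn : 0 < n) (R : RootSystemData (Fin n)) (a b : ℕ) : R.W :=
  ((List.range (b + 1 - a)).map (fun t => R.s ⟨(a + t) % n, Nat.mod_lt _ hn⟩)).prod

/-- The sum `α_{a+1} + ⋯ + α_b` of simple roots (0-based half-open interval `[a, b)`). -/
def aSum {n : ℕ} (hn : 0 < n) (R : RootSystemData (Fin n)) (a b : ℕ) : R.V :=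
  ∑ t ∈ Finset.Ico a b, R.α ⟨t % n, Nat.mod_lt _ hn⟩

/-
Positive roots outside `Δ⁺_J` are those `δ` with `B δ ϖ > 0`, and minusculity forces
`⟨ϖ, δ^∨⟩ = 1` for all of them. Let `β, γ` be two such roots that `⊲` and `≺` order oppositely.
If they were not orthogonal, the level computation would make `β - γ`, `γ - β`, `β - 2γ` or
`2γ - β` a root, and convexity of one of the two orders, with `Δ⁺_J` coming first in both,
rules each case out (the remaining case would produce infinitely many roots). Orthogonal labels
commute along Bruhat paths (a diamond), so insertion-sorting the labels of a `⊲`-increasing path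
with respect to `≺` gives a `≺`-increasing path with the same endpoint.
-/

namespace RootSystemData

variable {I : Type} [Fintype I] [DecidableEq I]

section

variable (R : RootSystemData I)

noncomputable def reflect (δ x : R.V) : R.V := x - R.coroot δ x • δ

lemma B_self_ne_zero {δ : R.V} (hδ : R.isRoot δ) : R.B δ δ ≠ 0 := (R.B_pos δ hδ).ne'

lemma reflect_self {δ : R.V} (hδ : R.isRoot δ) : R.reflect δ δ = -δ := by
  rw [reflect, coroot, mul_div_assoc, div_self (R.B_self_ne_zero hδ)]
  module

lemma reflect_reflect {δ : R.V} (hδ : R.isRoot δ) (x : R.V) :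
    R.reflect δ (R.reflect δ x) = x := by
  have hδδ := R.B_self_ne_zero hδ
  simp only [reflect, coroot, map_sub, map_smul, smul_eq_mul]
  match_scalars <;> field_simp; ring

lemma reflect_of_B_eq_zero {δ x : R.V} (h : R.B δ x = 0) : R.reflect δ x = x := by
  simp [reflect, coroot, h]

lemma reflect_smul {q : ℚ} (hq : q ≠ 0) (δ : R.V) : R.reflect (q • δ) = R.reflect δ := by
  ext x
  simp only [reflect, coroot, map_smul, LinearMap.smul_apply, smul_eq_mul, smul_smul]
  rcases eq_or_ne (R.B δ δ) 0 with h0 | h0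
  · simp [h0]
  · congr 2
    field_simp

lemma toLin_reflect (w : R.W) (δ x : R.V) :
    R.toLin w (R.reflect δ x) = R.reflect (R.toLin w δ) (R.toLin w x) := by
  simp only [reflect, coroot, map_sub, map_smul, R.B_inv]

lemma toLin_s (i : I) (x : R.V) : R.toLin (R.s i) x = R.reflect (R.α i) x := R.s_act i x

lemma s_mul_self (i : I) : R.s i * R.s i = 1 := by
  apply R.faithful
  ext x
  simp only [map_mul, map_one, Module.End.mul_apply, Module.End.one_apply, toLin_s]
  exact R.reflect_reflect (R.root_simple i) x

lemma toLin_refl {δ : R.V} (hδ : R.isRoot δ) (x : R.V) :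
    R.toLin (R.refl δ) x = R.reflect δ x := by
  rw [refl, dif_pos hδ]
  set u := (R.root_gen δ hδ).choose
  set j := (R.root_gen δ hδ).choose_spec.choose
  have hj : δ = R.toLin u (R.α j) := (R.root_gen δ hδ).choose_spec.choose_spec
  have hu : R.toLin u (R.toLin u⁻¹ x) = x := by
    rw [← Module.End.mul_apply, ← map_mul, mul_inv_cancel, map_one, Module.End.one_apply]
  rw [map_mul, map_mul, Module.End.mul_apply, Module.End.mul_apply, toLin_s,
    toLin_reflect, hu, ← hj]

lemma refl_mul_self {δ : R.V} (hδ : R.isRoot δ) : R.refl δ * R.refl δ = 1 := by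
  apply R.faithful
  ext x
  simp only [map_mul, map_one, Module.End.mul_apply, Module.End.one_apply, R.toLin_refl hδ]
  exact R.reflect_reflect hδ x

lemma refl_mul_comm {β γ : R.V} (hβ : R.isRoot β) (hγ : R.isRoot γ) (h : R.B β γ = 0) :
    R.refl β * R.refl γ = R.refl γ * R.refl β := by
  have h' : R.B γ β = 0 := by rw [R.B_symm, h]
  apply R.faithful
  ext x
  simp only [map_mul, Module.End.mul_apply, R.toLin_refl hβ, R.toLin_refl hγ, reflect, coroot,
    map_sub, map_smul, h, h', smul_eq_mul, mul_zero, sub_zero]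
  abel

lemma isRoot_reflect {δ x : R.V} (hδ : R.isRoot δ) (hx : R.isRoot x) :
    R.isRoot (R.reflect δ x) := by
  rw [← R.toLin_refl hδ]
  exact R.root_inv _ _ hx

lemma isRoot_neg {δ : R.V} (hδ : R.isRoot δ) : R.isRoot (-δ) := by
  simpa [R.reflect_self hδ] using R.isRoot_reflect hδ hδ

lemma ne_zero_of_isRoot {δ : R.V} (hδ : R.isRoot δ) : δ ≠ 0 := by
  rintro rfl
  simpa using R.B_pos 0 hδ

lemma coeff_eq_zero_of_sum_eq_zero {c : I → ℚ} (h : ∑ i, c i • R.α i = 0) (i : I) : c i = 0 :=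
  linearIndependent_iff'.mp R.indep Finset.univ c h i (Finset.mem_univ i)

lemma not_isPos_neg_of_isPos {δ : R.V} (hδ : R.IsPos δ) : ¬ R.IsPos (-δ) := by
  rintro ⟨-, d, hd⟩
  obtain ⟨hroot, c, hc⟩ := hδ
  have hsum : ∑ i, ((c i : ℚ) + d i) • R.α i = 0 := by
    simp only [add_smul, Finset.sum_add_distrib, ← hc, ← hd, add_neg_cancel]
  have hc0 (i : I) : (c i : ℚ) = 0 := by
    linarith [R.coeff_eq_zero_of_sum_eq_zero hsum i, (c i).cast_nonneg (α := ℚ),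
      (d i).cast_nonneg (α := ℚ)]
  exact R.ne_zero_of_isRoot hroot (by simp [hc, hc0])

lemma isPos_or_isPos_neg {δ : R.V} (hδ : R.isRoot δ) : R.IsPos δ ∨ R.IsPos (-δ) :=
  (R.pos_or_neg δ hδ).imp (fun h => ⟨hδ, h⟩) (fun h => ⟨R.isRoot_neg hδ, h⟩)

lemma reflect_eq_sub_smul {β γ : R.V} (hγ : R.isRoot γ) {c : ℚ}
    (h : 2 * R.B γ β = c * R.B γ γ) : R.reflect γ β = β - c • γ := by
  rw [reflect, coroot, h, mul_div_assoc, div_self (R.B_self_ne_zero hγ), mul_one]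

/-- `s_β s_γ` translates the line `β + ℚ (β - γ)` by `2 (β - γ)`, so it carries `β` to
infinitely many roots. -/
lemma eq_of_B_eq_of_B_eq {β γ : R.V} (hβ : R.isRoot β) (hγ : R.isRoot γ)
    (hβγ : R.B β γ = R.B β β) (hγγ : R.B γ γ = R.B β β) : β = γ := by
  by_contra hne
  have hγβ : R.B γ β = R.B β β := by rw [R.B_symm, hβγ]
  set f : ℕ → R.V := fun n => β + (2 * n : ℚ) • (β - γ)
  have hroot (n : ℕ) : R.isRoot (f n) := by
    induction n with
    | zero => simpa [f] using hβ
    | succ n ih =>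
      have h₁ : R.reflect γ (f n) = f n - (2 : ℚ) • γ := by
        refine R.reflect_eq_sub_smul hγ ?_
        simp only [f, map_add, map_smul, map_sub, smul_eq_mul, hγβ, hγγ]
        ring
      have h₂ : R.reflect β (f n - (2 : ℚ) • γ) = f n - (2 : ℚ) • γ - (-2 : ℚ) • β := by
        refine R.reflect_eq_sub_smul hβ ?_
        simp only [f, map_add, map_smul, map_sub, smul_eq_mul, hβγ]
        ring
      have h₃ : f n - (2 : ℚ) • γ - (-2 : ℚ) • β = f (n + 1) := by
        simp only [f]
        push_cast
        module
      rw [← h₃, ← h₂, ← h₁]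
      exact R.isRoot_reflect hβ (R.isRoot_reflect hγ ih)
  have hinj : Function.Injective f := by
    intro n₁ n₂ h
    have : (2 * (n₁ - n₂ : ℚ)) • (β - γ) = 0 := by
      rw [← sub_eq_zero] at h
      rw [← h]
      module
    rcases smul_eq_zero.mp this with h | h
    · exact_mod_cast (by linarith : (n₁ : ℚ) = n₂)
    · exact (hne (sub_eq_zero.mp h)).elim
  exact R.root_finite.not_infinite (Set.infinite_of_injective_forall_mem hinj hroot)

lemma exists_word (w : R.W) : ∃ l : List I, (l.map R.s).prod = w := by
  have hw : w ∈ Subgroup.closure (Set.range R.s) := R.gen ▸ Subgroup.mem_top w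
  induction hw using Subgroup.closure_induction with
  | mem x hx =>
    obtain ⟨i, rfl⟩ := hx
    exact ⟨[i], by simp⟩
  | one => exact ⟨[], by simp⟩
  | mul x y _ _ hx hy =>
    obtain ⟨l₁, rfl⟩ := hx
    obtain ⟨l₂, rfl⟩ := hy
    exact ⟨l₁ ++ l₂, by simp⟩
  | inv x _ hx =>
    obtain ⟨l, rfl⟩ := hx
    refine ⟨l.reverse, ?_⟩
    have hinv : (fun x => x⁻¹) ∘ R.s = R.s :=
      funext fun i => inv_eq_of_mul_eq_one_left (R.s_mul_self i)
    rw [List.map_reverse, List.prod_reverse_noncomm, List.map_map, hinv]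

lemma len_le_length {l : List I} : R.len (l.map R.s).prod ≤ l.length :=
  Nat.sInf_le ⟨l, rfl, rfl⟩

lemma exists_reduced_word (w : R.W) :
    ∃ l : List I, l.length = R.len w ∧ (l.map R.s).prod = w := by
  obtain ⟨l, hl⟩ := R.exists_word w
  have hne : {n | ∃ l : List I, l.length = n ∧ (l.map R.s).prod = w}.Nonempty :=
    ⟨l.length, l, rfl, hl⟩
  exact Nat.sInf_mem hne

lemma eq_smul_simple_of_isPos_neg_reflect {i : I} {δ : R.V} (hδ : R.IsPos δ)
    (hneg : R.IsPos (-R.reflect (R.α i) δ)) : ∃ q : ℚ, q ≠ 0 ∧ δ = q • R.α i := by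
  obtain ⟨hroot, c, hc⟩ := hδ
  obtain ⟨-, d, hd⟩ := hneg
  have hsingle : R.coroot (R.α i) δ • R.α i =
      ∑ j, (if j = i then R.coroot (R.α i) δ else 0) • R.α j := by
    simp [ite_smul]
  have hsum : ∑ j, ((c j : ℚ) + d j - if j = i then R.coroot (R.α i) δ else 0) • R.α j = 0 := by
    simp only [sub_smul, add_smul, Finset.sum_sub_distrib, Finset.sum_add_distrib, ← hc, ← hd,
      ← hsingle, reflect]
    abel
  have hc0 (j : I) (hj : j ≠ i) : (c j : ℚ) = 0 := by
    have := R.coeff_eq_zero_of_sum_eq_zero hsum j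
    rw [if_neg hj, sub_zero] at this
    linarith [(c j).cast_nonneg (α := ℚ), (d j).cast_nonneg (α := ℚ)]
  have hδi : δ = (c i : ℚ) • R.α i := by
    rw [hc, Finset.sum_eq_single i (fun j _ hj => by rw [hc0 j hj, zero_smul]) (by simp)]
  refine ⟨c i, fun h0 => R.ne_zero_of_isRoot hroot ?_, hδi⟩
  rw [hδi, h0, zero_smul]

lemma exists_word_mul_refl {δ : R.V} (hδ : R.IsPos δ) :
    ∀ l : List I, R.IsPos (-R.toLin (l.map R.s).prod δ) →
      ∃ l' : List I, l'.length + 1 = l.length ∧ (l'.map R.s).prod = (l.map R.s).prod * R.refl δ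
  | [], hneg => by simp [R.not_isPos_neg_of_isPos hδ] at hneg
  | i :: l, hneg => by
    set π := (l.map R.s).prod
    have hπδ : R.isRoot (R.toLin π δ) := R.root_inv _ _ hδ.1
    rcases R.isPos_or_isPos_neg hπδ with hpos | hneg'
    · rw [List.map_cons, List.prod_cons, map_mul, Module.End.mul_apply, toLin_s] at hneg
      obtain ⟨q, hq, hqe⟩ := R.eq_smul_simple_of_isPos_neg_reflect hpos hneg
      have hconj : R.s i * π = π * R.refl δ := by
        apply R.faithful
        ext x
        rw [map_mul, map_mul, Module.End.mul_apply, Module.End.mul_apply, toLin_s,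
          R.toLin_refl hδ.1, toLin_reflect, hqe, R.reflect_smul hq]
      refine ⟨l, rfl, ?_⟩
      rw [List.map_cons, List.prod_cons, hconj, mul_assoc, R.refl_mul_self hδ.1, mul_one]
    · obtain ⟨l', hlen, hl'⟩ := exists_word_mul_refl hδ l hneg'
      exact ⟨i :: l', by simp [← hlen], by simp [hl', mul_assoc]⟩

lemma len_mul_refl_lt {δ : R.V} {w : R.W} (hδ : R.IsPos δ)
    (hneg : R.IsPos (-R.toLin w δ)) : R.len (w * R.refl δ) < R.len w := by
  obtain ⟨l, hlen, rfl⟩ := R.exists_reduced_word w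
  obtain ⟨l', hl', hprod⟩ := R.exists_word_mul_refl hδ l hneg
  have := R.len_le_length (l := l')
  rw [hprod] at this
  omega

lemma len_lt_mul_refl {δ : R.V} {w : R.W} (hδ : R.IsPos δ)
    (hpos : R.IsPos (R.toLin w δ)) : R.len w < R.len (w * R.refl δ) := by
  have hneg : R.IsPos (-R.toLin (w * R.refl δ) δ) := by
    rwa [map_mul, Module.End.mul_apply, R.toLin_refl hδ.1, R.reflect_self hδ.1, map_neg, neg_neg]
  simpa [mul_assoc, R.refl_mul_self hδ.1] using R.len_mul_refl_lt hδ hneg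

end

section

variable {R : RootSystemData I}

lemma BruhatEdge.isPos_toLin {x : R.W} {β : R.V} (h : R.BruhatEdge x β) :
    R.IsPos (R.toLin x β) := by
  refine (R.isPos_or_isPos_neg (R.root_inv _ _ h.1.1)).resolve_right fun hneg => ?_
  have := R.len_mul_refl_lt h.1 hneg
  have := h.2
  omega

lemma BruhatEdge.swap {x : R.W} {β γ : R.V} (hβ : R.BruhatEdge x β)
    (hγ : R.BruhatEdge (x * R.refl β) γ) (h : R.B β γ = 0) :
    R.BruhatEdge x γ ∧ R.BruhatEdge (x * R.refl γ) β ∧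
      x * R.refl γ * R.refl β = x * R.refl β * R.refl γ := by
  have h' : R.B γ β = 0 := by rw [R.B_symm, h]
  have hcomm : x * R.refl γ * R.refl β = x * R.refl β * R.refl γ := by
    rw [mul_assoc, mul_assoc, R.refl_mul_comm hβ.1.1 hγ.1.1 h]
  have hxγ : R.IsPos (R.toLin x γ) := by
    simpa [R.toLin_refl hβ.1.1, R.reflect_of_B_eq_zero h] using hγ.isPos_toLin
  have hxγβ : R.IsPos (R.toLin (x * R.refl γ) β) := by
    simpa [R.toLin_refl hγ.1.1, R.reflect_of_B_eq_zero h'] using hβ.isPos_toLin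
  have h₁ := R.len_lt_mul_refl hγ.1 hxγ
  have h₂ := R.len_lt_mul_refl hβ.1 hxγβ
  have h₃ : R.len (x * R.refl γ * R.refl β) = R.len x + 2 := by rw [hcomm, hγ.2, hβ.2]
  exact ⟨⟨hγ.1, by omega⟩, ⟨hβ.1, by omega⟩, hcomm⟩

lemma bgPath_swap {x w : R.W} {β γ : R.V} {l : List R.V} (hpath : BGPath R x (β :: γ :: l) w)
    (h : R.B β γ = 0) : BGPath R x (γ :: β :: l) w := by
  obtain ⟨hβ, hγ, hl⟩ := hpath
  obtain ⟨hγ', hβ', hcomm⟩ := hβ.swap hγ h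
  exact ⟨hγ', hβ', hcomm ▸ hl⟩

end

section

variable (R : RootSystemData I) {k : I} {ϖ : R.V}

lemma B_reflect_reflect {δ : R.V} (hδ : R.isRoot δ) (x y : R.V) :
    R.B (R.reflect δ x) (R.reflect δ y) = R.B x y := by
  rw [← R.toLin_refl hδ, ← R.toLin_refl hδ, R.B_inv]

lemma B_simple_fundamental (hfund : R.IsFundamental k ϖ) (i : I) :
    R.B (R.α i) ϖ = if i = k then R.B (R.α i) (R.α i) / 2 else 0 := by
  have h := hfund i
  have hii := R.B_self_ne_zero (R.root_simple i)
  rw [coroot] at h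
  split_ifs at h ⊢ <;> field_simp at h <;> linarith

lemma B_fundamental_eq_coeff (hfund : R.IsFundamental k ϖ) (c : I → ℚ) :
    R.B (∑ i, c i • R.α i) ϖ = c k * (R.B (R.α k) (R.α k) / 2) := by
  simp [R.B_simple_fundamental hfund]

lemma mem_span_of_B_fundamental_eq_zero (hfund : R.IsFundamental k ϖ) {δ : R.V}
    (hδ : R.IsPos δ) (h : R.B δ ϖ = 0) : δ ∈ Submodule.span ℚ (R.α '' {i | i ≠ k}) := by
  obtain ⟨-, c, rfl⟩ := hδ
  have hkk := R.B_pos _ (R.root_simple k)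
  have hck : (c k : ℚ) = 0 := by
    rw [R.B_fundamental_eq_coeff hfund] at h
    rcases mul_eq_zero.mp h with h | h
    · exact h
    · linarith
  refine Submodule.sum_mem _ fun i _ => ?_
  rcases eq_or_ne i k with rfl | hik
  · simp [hck]
  · exact Submodule.smul_mem _ _ (Submodule.subset_span ⟨i, hik, rfl⟩)

lemma B_fundamental_pos (hfund : R.IsFundamental k ϖ) {δ : R.V} (hδ : R.IsPos δ)
    (hδJ : δ ∉ Submodule.span ℚ (R.α '' {i | i ≠ k})) : 0 < R.B δ ϖ := by
  refine lt_of_le_of_ne ?_ fun h => hδJ (R.mem_span_of_B_fundamental_eq_zero hfund hδ h.symm)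
  obtain ⟨-, c, rfl⟩ := hδ
  rw [R.B_fundamental_eq_coeff hfund]
  have := R.B_pos _ (R.root_simple k)
  positivity

lemma B_fundamental_eq_half (hfund : R.IsFundamental k ϖ) (hmin : R.IsMinuscule ϖ) {δ : R.V}
    (hδ : R.IsPos δ) (hδJ : δ ∉ Submodule.span ℚ (R.α '' {i | i ≠ k})) :
    R.B δ ϖ = R.B δ δ / 2 := by
  have hpos := R.B_fundamental_pos hfund hδ hδJ
  have hδδ := R.B_pos δ hδ.1
  have hcoroot := hmin δ hδ.1
  simp only [coroot, Set.mem_insert_iff, Set.mem_singleton_iff] at hcoroot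
  rcases hcoroot with h | h | h <;> field_simp at h <;> linarith

lemma B_eq_zero_or_half_or_self (hfund : R.IsFundamental k ϖ) (hmin : R.IsMinuscule ϖ)
    {β γ : R.V} (hβ : R.IsPos β) (hβJ : β ∉ Submodule.span ℚ (R.α '' {i | i ≠ k}))
    (hγ : R.IsPos γ) (hγJ : γ ∉ Submodule.span ℚ (R.α '' {i | i ≠ k})) :
    R.B β γ = 0 ∨ R.B β γ = R.B γ γ / 2 ∨ R.B β γ = R.B γ γ := by
  have hββ := R.B_pos β hβ.1
  have hγγ := R.B_pos γ hγ.1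
  have hβϖ := R.B_fundamental_eq_half hfund hmin hβ hβJ
  have hγϖ := R.B_fundamental_eq_half hfund hmin hγ hγJ
  have hδϖ : R.B (R.reflect β γ) ϖ = R.B γ γ / 2 - R.B β γ := by
    simp only [reflect, coroot, map_sub, map_smul, LinearMap.sub_apply, LinearMap.smul_apply,
      smul_eq_mul, hβϖ, hγϖ]
    field_simp
  have hcoroot := hmin _ (R.isRoot_reflect hβ.1 hγ.1)
  simp only [coroot, R.B_reflect_reflect hβ.1, hδϖ, Set.mem_insert_iff,
    Set.mem_singleton_iff] at hcoroot
  rcases hcoroot with h | h | h <;> field_simp at h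
  · exact Or.inr (Or.inr (by linarith))
  · exact Or.inr (Or.inl (by linarith))
  · exact Or.inl (by linarith)

def IsJInitialReflectionOrder (J : Set I) (lt : R.V → R.V → Prop) : Prop :=
  R.IsReflectionOrder lt ∧
    ∀ β γ, R.posJ J β → R.IsPos γ → γ ∉ Submodule.span ℚ (R.α '' J) → lt β γ

end

section

variable {R : RootSystemData I} {lt : R.V → R.V → Prop} {k : I} {ϖ : R.V}

lemma IsReflectionOrder.asymm (h : R.IsReflectionOrder lt) {β γ : R.V} (hβγ : lt β γ) :
    ¬ lt γ β :=
  fun hγβ => h.1 β (h.2.1 β γ β hβγ hγβ)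

lemma IsReflectionOrder.lt_add_of_lt (h : R.IsReflectionOrder lt) {β γ δ : R.V}
    (hβ : R.IsPos β) (hγ : R.IsPos γ) (hδ : R.IsPos δ) (hsum : β + γ = δ) (hβγ : lt β γ) :
    lt β δ ∧ lt δ γ := by
  subst hsum
  refine (h.2.2.2 β γ hβ hγ hδ).resolve_right fun ⟨hγδ, hδβ⟩ => h.asymm hβγ ?_
  exact h.2.1 _ _ _ hγδ hδβ

lemma IsJInitialReflectionOrder.lt_of_posJ_add {J : Set I} (h : R.IsJInitialReflectionOrder J lt)
    {β γ δ : R.V} (hδ : R.posJ J δ) (hγ : R.IsPos γ)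
    (hγJ : γ ∉ Submodule.span ℚ (R.α '' J)) (hβ : R.IsPos β) (hsum : δ + γ = β) : lt β γ :=
  (h.1.lt_add_of_lt hδ.1 hγ hβ hsum (h.2 δ γ hδ hγ hγJ)).2

lemma B_eq_of_isPos_sub (hfund : R.IsFundamental k ϖ) (hmin : R.IsMinuscule ϖ) {β γ : R.V}
    (hβ : R.IsPos β) (hβJ : β ∉ Submodule.span ℚ (R.α '' {i | i ≠ k}))
    (hγ : R.IsPos γ) (hγJ : γ ∉ Submodule.span ℚ (R.α '' {i | i ≠ k}))
    (hsub : R.IsPos (β - γ)) (hsubJ : β - γ ∉ Submodule.span ℚ (R.α '' {i | i ≠ k})) :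
    R.B β γ = R.B γ γ := by
  have hβϖ := R.B_fundamental_eq_half hfund hmin hβ hβJ
  have hγϖ := R.B_fundamental_eq_half hfund hmin hγ hγJ
  have hsubϖ := R.B_fundamental_eq_half hfund hmin hsub hsubJ
  simp only [map_sub, LinearMap.sub_apply, hβϖ, hγϖ, R.B_symm γ β] at hsubϖ
  linarith

lemma not_isPos_sub_of_lt_of_lt (hfund : R.IsFundamental k ϖ) (hmin : R.IsMinuscule ϖ)
    {lt' : R.V → R.V → Prop} (hlt : R.IsJInitialReflectionOrder {i | i ≠ k} lt)
    (hlt' : R.IsJInitialReflectionOrder {i | i ≠ k} lt') {β γ : R.V}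
    (hβ : R.IsPos β) (hβJ : β ∉ Submodule.span ℚ (R.α '' {i | i ≠ k}))
    (hγ : R.IsPos γ) (hγJ : γ ∉ Submodule.span ℚ (R.α '' {i | i ≠ k}))
    (hβγ : lt β γ) (hγβ : lt' γ β) : ¬ R.IsPos (β - γ) := by
  intro hsub
  have hsubJ : β - γ ∉ Submodule.span ℚ (R.α '' {i | i ≠ k}) := fun h =>
    hlt'.1.asymm hγβ (hlt'.lt_of_posJ_add ⟨hsub, h⟩ hγ hγJ hβ (sub_add_cancel β γ))
  have hm := R.B_eq_of_isPos_sub hfund hmin hβ hβJ hγ hγJ hsub hsubJ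
  have hγγ := R.B_pos γ hγ.1
  have hβϖ := R.B_fundamental_eq_half hfund hmin hβ hβJ
  have hγϖ := R.B_fundamental_eq_half hfund hmin hγ hγJ
  rcases R.B_eq_zero_or_half_or_self hfund hmin hγ hγJ hβ hβJ with h | h | h <;>
    rw [R.B_symm γ β] at h
  · linarith
  · -- `s_γ β = β - 2γ` is a root of level zero; whichever sign it has, it contradicts one order
    have hroot : R.isRoot (β - (2 : ℚ) • γ) := by
      rw [← R.reflect_eq_sub_smul hγ.1 (by rw [R.B_symm]; linarith)]
      exact R.isRoot_reflect hγ.1 hβ.1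
    rcases R.isPos_or_isPos_neg hroot with hpos | hneg
    · have hposJ : R.posJ {i | i ≠ k} (β - (2 : ℚ) • γ) := by
        refine ⟨hpos, R.mem_span_of_B_fundamental_eq_zero hfund hpos ?_⟩
        simp only [map_sub, map_smul, LinearMap.sub_apply, LinearMap.smul_apply, smul_eq_mul,
          hβϖ, hγϖ]
        linarith
      have h₁ := hlt'.lt_of_posJ_add hposJ hγ hγJ hsub (by module)
      exact hlt'.1.asymm hγβ (hlt'.1.lt_add_of_lt hsub hγ hβ (sub_add_cancel β γ) h₁).2
    · rw [neg_sub] at hneg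
      have hnegJ : R.posJ {i | i ≠ k} ((2 : ℚ) • γ - β) := by
        refine ⟨hneg, R.mem_span_of_B_fundamental_eq_zero hfund hneg ?_⟩
        simp only [map_sub, map_smul, LinearMap.sub_apply, LinearMap.smul_apply, smul_eq_mul,
          hβϖ, hγϖ]
        linarith
      have h₁ := hlt.lt_of_posJ_add hnegJ hsub hsubJ hγ (by module)
      exact hlt.1.asymm hβγ (hlt.1.lt_add_of_lt hγ hsub hβ (add_sub_cancel γ β) h₁).1
  · have hne : β ≠ γ := fun h => hlt.1.1 β (h ▸ hβγ)
    exact hne (R.eq_of_B_eq_of_B_eq hβ.1 hγ.1 h (by linarith))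

lemma B_eq_zero_of_lt_of_lt (hfund : R.IsFundamental k ϖ) (hmin : R.IsMinuscule ϖ)
    {lt' : R.V → R.V → Prop} (hlt : R.IsJInitialReflectionOrder {i | i ≠ k} lt)
    (hlt' : R.IsJInitialReflectionOrder {i | i ≠ k} lt') {β γ : R.V}
    (hβ : R.IsPos β) (hβJ : β ∉ Submodule.span ℚ (R.α '' {i | i ≠ k}))
    (hγ : R.IsPos γ) (hγJ : γ ∉ Submodule.span ℚ (R.α '' {i | i ≠ k}))
    (hβγ : lt β γ) (hγβ : lt' γ β) : R.B β γ = 0 := by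
  have hsub := R.not_isPos_sub_of_lt_of_lt hfund hmin hlt hlt' hβ hβJ hγ hγJ hβγ hγβ
  have hsub' := R.not_isPos_sub_of_lt_of_lt hfund hmin hlt' hlt hγ hγJ hβ hβJ hγβ hβγ
  have hnot : ¬ R.isRoot (β - γ) := fun h =>
    (R.isPos_or_isPos_neg h).elim hsub (by rwa [neg_sub])
  have hββ := R.B_pos β hβ.1
  have hγγ := R.B_pos γ hγ.1
  rcases R.B_eq_zero_or_half_or_self hfund hmin hβ hβJ hγ hγJ with h | h | h
  · exact h
  · refine (hnot ?_).elim
    rw [← one_smul ℚ γ, ← R.reflect_eq_sub_smul hγ.1 (by rw [R.B_symm]; linarith)]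
    exact R.isRoot_reflect hγ.1 hβ.1
  rcases R.B_eq_zero_or_half_or_self hfund hmin hγ hγJ hβ hβJ with h' | h' | h' <;>
    rw [R.B_symm γ β] at h'
  · exact h'
  · refine (hnot ?_).elim
    rw [← neg_sub, ← one_smul ℚ β, ← R.reflect_eq_sub_smul hβ.1 (by linarith)]
    exact R.isRoot_neg (R.isRoot_reflect hβ.1 hγ.1)
  · have hne : β ≠ γ := fun h => hlt.1.1 β (h ▸ hβγ)
    exact (hne (R.eq_of_B_eq_of_B_eq hβ.1 hγ.1 h' (by linarith))).elim

lemma exists_pairwise_bgPath_perm_cons (htrans : ∀ a b c, lt a b → lt b c → lt a c) {β : R.V} :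
    ∀ {l : List R.V} {x w : R.W}, l.Pairwise lt → BGPath R x (β :: l) w →
      (∀ γ ∈ l, lt β γ ∨ (lt γ β ∧ R.B β γ = 0)) →
      ∃ l', l'.Perm (β :: l) ∧ l'.Pairwise lt ∧ BGPath R x l' w
  | [], _, _, _, hpath, _ => ⟨[β], .refl _, List.pairwise_singleton _ _, hpath⟩
  | γ :: l, _, _, hl, hpath, hβ => by
    rw [List.pairwise_cons] at hl
    rcases hβ γ List.mem_cons_self with hβγ | ⟨hγβ, horth⟩
    · refine ⟨β :: γ :: l, .refl _, List.pairwise_cons.2 ⟨fun δ hδ => ?_, .cons hl.1 hl.2⟩, hpath⟩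
      rcases List.mem_cons.1 hδ with rfl | hδ
      exacts [hβγ, htrans _ _ _ hβγ (hl.1 δ hδ)]
    · obtain ⟨hγ, hpath⟩ := bgPath_swap hpath horth
      obtain ⟨l', hperm, hl', hpath'⟩ := exists_pairwise_bgPath_perm_cons htrans hl.2 hpath
        fun δ hδ => hβ δ (List.mem_cons_of_mem γ hδ)
      refine ⟨γ :: l', (hperm.cons γ).trans (.swap β γ l),
        List.pairwise_cons.2 ⟨fun δ hδ => ?_, hl'⟩, hγ, hpath'⟩
      rcases List.mem_cons.1 (hperm.subset hδ) with rfl | hδ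
      exacts [hγβ, hl.1 δ hδ]

lemma exists_pairwise_bgPath_perm (htrans : ∀ a b c, lt a b → lt b c → lt a c) :
    ∀ {l : List R.V} {x w : R.W}, l.Pairwise (fun β γ => lt β γ ∨ (lt γ β ∧ R.B β γ = 0)) →
      BGPath R x l w → ∃ l', l'.Perm l ∧ l'.Pairwise lt ∧ BGPath R x l' w
  | [], _, _, _, hpath => ⟨[], .nil, .nil, hpath⟩
  | β :: l, _, _, hl, ⟨hβ, hpath⟩ => by
    rw [List.pairwise_cons] at hl
    obtain ⟨l', hperm, hl', hpath'⟩ := exists_pairwise_bgPath_perm htrans hl.2 hpath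
    obtain ⟨l'', hperm', hl'', hpath''⟩ := exists_pairwise_bgPath_perm_cons htrans hl'
      ⟨hβ, hpath'⟩ fun γ hγ => hl.1 γ (hperm.subset hγ)
    exact ⟨l'', hperm'.trans (hperm.cons β), hl'', hpath''⟩

variable (R) in
/-- The paper's `ed(BG_y^⊲)`. -/
def labelIncreasingEndpoints (J : Set I) (y : R.W) (lt : R.V → R.V → Prop) : Set R.W :=
  {w | ∃ labels : List R.V, (∀ β ∈ labels, R.IsPos β ∧ β ∉ Submodule.span ℚ (R.α '' J)) ∧
    labels.IsChain lt ∧ BGPath R y labels w}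

lemma labelIncreasingEndpoints_subset (hfund : R.IsFundamental k ϖ) (hmin : R.IsMinuscule ϖ)
    {lt' : R.V → R.V → Prop}
    (hlt : R.IsJInitialReflectionOrder {i | i ≠ k} lt)
    (hlt' : R.IsJInitialReflectionOrder {i | i ≠ k} lt') (y : R.W) :
    R.labelIncreasingEndpoints {i | i ≠ k} y lt ⊆ R.labelIncreasingEndpoints {i | i ≠ k} y lt' := by
  rintro w ⟨labels, hlabels, hchain, hpath⟩
  have : Trans lt lt lt := ⟨hlt.1.2.1 _ _ _⟩
  have hcompare : labels.Pairwise (fun β γ => lt' β γ ∨ (lt' γ β ∧ R.B β γ = 0)) := by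
    refine hchain.pairwise.imp_of_mem fun {β γ} hβ hγ hβγ => ?_
    obtain ⟨hβ, hβJ⟩ := hlabels β hβ
    obtain ⟨hγ, hγJ⟩ := hlabels γ hγ
    have hne : β ≠ γ := fun h => hlt.1.1 β (h ▸ hβγ)
    exact (hlt'.1.2.2.1 β γ hβ hγ hne).imp_right fun hγβ =>
      ⟨hγβ, R.B_eq_zero_of_lt_of_lt hfund hmin hlt hlt' hβ hβJ hγ hγJ hβγ hγβ⟩
  obtain ⟨l', hperm, hl', hpath'⟩ := exists_pairwise_bgPath_perm hlt'.1.2.1 hcompare hpath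
  exact ⟨l', fun β hβ => hlabels β (hperm.subset hβ), hl'.isChain, hpath'⟩

end

end RootSystemData

theorem stmt19_general {I : Type} [Fintype I] [DecidableEq I] (R : RootSystemData I)
    (k : I) (ϖ : R.V) (hfund : R.IsFundamental k ϖ) (hmin : R.IsMinuscule ϖ)
    (J : Set I) (hJ : J = {i | i ≠ k})
    (lt1 lt2 : R.V → R.V → Prop)
    (h1 : R.IsReflectionOrder lt1) (h2 : R.IsReflectionOrder lt2)
    (hc1 : ∀ β γ, R.posJ J β → R.IsPos γ → γ ∉ Submodule.span ℚ (R.α '' J) →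
      lt1 β γ)
    (hc2 : ∀ β γ, R.posJ J β → R.IsPos γ → γ ∉ Submodule.span ℚ (R.α '' J) →
      lt2 β γ)
    (y : R.W) :
    {w : R.W | ∃ labels : List R.V,
        (∀ β ∈ labels, R.IsPos β ∧ β ∉ Submodule.span ℚ (R.α '' J)) ∧
        labels.Chain' lt1 ∧ BGPath R y labels w} =
    {w : R.W | ∃ labels : List R.V,
        (∀ β ∈ labels, R.IsPos β ∧ β ∉ Submodule.span ℚ (R.α '' J)) ∧
        labels.Chain' lt2 ∧ BGPath R y labels w} := by
  subst hJ
  exact Set.Subset.antisymm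
    (R.labelIncreasingEndpoints_subset hfund hmin ⟨h1, hc1⟩ ⟨h2, hc2⟩ y)
    (R.labelIncreasingEndpoints_subset hfund hmin ⟨h2, hc2⟩ ⟨h1, hc1⟩ y)

/-- The set of endpoints of label-increasing Bruhat-graph paths from `y ∈ W^J`
with all labels in `Δ⁺ \ Δ⁺_J` does not depend on the choice of a reflection
order satisfying `β ⊲ γ` for `β ∈ Δ⁺_J`, `γ ∈ Δ⁺ \ Δ⁺_J`. -/
theorem stmt19 {I : Type} [Fintype I] [DecidableEq I] (R : RootSystemData I)
    (k : I) (ϖ : R.V) (hfund : R.IsFundamental k ϖ) (hmin : R.IsMinuscule ϖ)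
    (J : Set I) (hJ : J = {i | i ≠ k})
    (lt1 lt2 : R.V → R.V → Prop)
    (h1 : R.IsReflectionOrder lt1) (h2 : R.IsReflectionOrder lt2)
    (hc1 : ∀ β γ, R.posJ J β → R.IsPos γ → γ ∉ Submodule.span ℚ (R.α '' J) →
      lt1 β γ)
    (hc2 : ∀ β γ, R.posJ J β → R.IsPos γ → γ ∉ Submodule.span ℚ (R.α '' J) →
      lt2 β γ)
    (y : R.W) (hy : R.IsMinRep J y) :
    {w : R.W | ∃ labels : List R.V,
        (∀ β ∈ labels, R.IsPos β ∧ β ∉ Submodule.span ℚ (R.α '' J)) ∧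
        labels.Chain' lt1 ∧ BGPath R y labels w} =
    {w : R.W | ∃ labels : List R.V,
        (∀ β ∈ labels, R.IsPos β ∧ β ∉ Submodule.span ℚ (R.α '' J)) ∧
        labels.Chain' lt2 ∧ BGPath R y labels w} :=
  stmt19_general R k ϖ hfund hmin J hJ lt1 lt2 h1 h2 hc1 hc2 y
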